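/- Let n be a positive even integer. Then ⌈log₂ n⌉ ≤ ‖n‖₂ ≤ 2·log₂(n) − 1, where log₂ denotes the real base-2 logarithm. -/

import Mathlib

/-!
An expression with `m` copies of `l ≥ 2` has value at most `l ^ m`, because `x + y ≤ x * y`
whenever `x, y ≥ 2`; this gives the lower bound. For the upper bound, write an even `n > 2` as
`2 * (n / 2)` when `4 ∣ n` and as `(n - 2) + 2` otherwise. Each step costs one 2, and a step of
the second kind is always followed by one of the first, so each halving of `n` costs at most
two 2's; the invariant `‖n‖₂ + 1 ≤ 2 ⌊log₂ n⌋`, sharpened by one when `4 ∣ n`, carries the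
induction.
-/

/-- `CanRepr l n m` means `n` can be expressed using exactly `m` copies of `l`
    combined with addition and multiplication (and parentheses). -/
inductive CanRepr (l : ℕ) : ℕ → ℕ → Prop
  | base : CanRepr l l 1
  | add {a b p q : ℕ} : CanRepr l a p → CanRepr l b q → CanRepr l (a + b) (p + q)
  | mul {a b p q : ℕ} : CanRepr l a p → CanRepr l b q → CanRepr l (a * b) (p + q)

/-- The `l`-complexity `‖n‖_l`: the minimal number of `l`'s needed to express `n`
    using only addition and multiplication. (By convention `sInf ∅ = 0`.) -/
noncomputable def complexity (l n : ℕ) : ℕ := sInf {m | CanRepr l n m}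

namespace CanRepr

variable {l n m : ℕ}

theorem one_le (h : CanRepr l n m) : 1 ≤ m := by
  induction h with
  | base => rfl
  | add _ _ ihp _ | mul _ _ ihp _ => omega

theorem le_pow (hl : 2 ≤ l) (h : CanRepr l n m) : n ≤ l ^ m := by
  induction h with
  | base => simp
  | @add a b p q hp hq iha ihb =>
    have two_le_pow {k : ℕ} (hk : 1 ≤ k) : 2 ≤ l ^ k := hl.trans (Nat.le_self_pow (by omega) l)
    calc a + b ≤ l ^ p + l ^ q := Nat.add_le_add iha ihb
      _ ≤ l ^ p * l ^ q := Nat.add_le_mul (two_le_pow hp.one_le) (two_le_pow hq.one_le)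
      _ = l ^ (p + q) := (pow_add l p q).symm
  | mul _ _ iha ihb => rw [pow_add]; exact Nat.mul_le_mul iha ihb

theorem complexity_le (h : CanRepr l n m) : complexity l n ≤ m := Nat.sInf_le h

theorem canRepr_complexity (h : CanRepr l n m) : CanRepr l n (complexity l n) :=
  Nat.sInf_mem ⟨m, h⟩

end CanRepr

theorem exists_canRepr_two_add_one_le_log {n : ℕ} (hn : 0 < n) (heven : 2 ∣ n) :
    ∃ m, CanRepr 2 n m ∧ m + 1 ≤ 2 * Nat.log 2 n ∧ (4 ∣ n → m + 2 ≤ 2 * Nat.log 2 n) := by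
  induction n using Nat.strong_induction_on with
  | _ n ih =>
  obtain ⟨k, rfl⟩ := heven
  rcases Nat.lt_or_ge k 2 with hk | hk
  · obtain rfl : k = 1 := by omega
    exact ⟨1, .base, by rw [Nat.log_eq_one_iff'.mpr (by norm_num)], by omega⟩
  have hlog : Nat.log 2 (2 * k) = Nat.log 2 k + 1 := by
    rw [mul_comm]; exact Nat.log_mul_base one_lt_two (by omega)
  rcases Nat.even_or_odd k with ⟨j, rfl⟩ | ⟨j, rfl⟩
  · obtain ⟨m, hm, hm_le, -⟩ := ih (j + j) (by omega) (by omega) ⟨j, by omega⟩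
    exact ⟨1 + m, .mul .base hm, by omega, fun _ => by omega⟩
  · obtain ⟨m, hm, -, hm_le⟩ := ih (4 * j) (by omega) (by omega) ⟨2 * j, by omega⟩
    have hlog_mono : Nat.log 2 (4 * j) ≤ Nat.log 2 (2 * (2 * j + 1)) :=
      Nat.log_mono_right (by omega)
    have hsum : 2 * (2 * j + 1) = 4 * j + 2 := by ring
    exact ⟨m + 1, hsum ▸ .add hm .base, by omega, fun h4 => by omega⟩

theorem complexity_two_add_one_le_log {n : ℕ} (hn : 0 < n) (heven : 2 ∣ n) :
    complexity 2 n + 1 ≤ 2 * Nat.log 2 n := by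
  obtain ⟨m, hm, hm_le, -⟩ := exists_canRepr_two_add_one_le_log hn heven
  have := hm.complexity_le
  omega

theorem stmt_18 (n : ℕ) (hn : 0 < n) (heven : 2 ∣ n) :
    ⌈Real.logb 2 n⌉ ≤ (complexity 2 n : ℤ) ∧
      (complexity 2 n : ℝ) ≤ 2 * Real.logb 2 n - 1 := by
  obtain ⟨m, hm, -⟩ := exists_canRepr_two_add_one_le_log hn heven
  have hmin := hm.canRepr_complexity
  constructor
  · have hpow : (n : ℝ) ≤ 2 ^ complexity 2 n := by exact_mod_cast hmin.le_pow le_rfl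
    have hlogb : Real.logb 2 n ≤ complexity 2 n := by
      rw [Real.logb_le_iff_le_rpow one_lt_two (by exact_mod_cast hn)]; exact_mod_cast hpow
    exact Int.ceil_le.mpr (by exact_mod_cast hlogb)
  · have hnat : (Nat.log 2 n : ℝ) ≤ Real.logb 2 n := Real.natLog_le_logb n 2
    have hcast : (complexity 2 n : ℝ) + 1 ≤ 2 * Nat.log 2 n := by
      exact_mod_cast complexity_two_add_one_le_log hn heven
    linarith
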